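/- Define P̄(R) = λ·P_tx·(3K₁·(R² − r₀²)/(R² r₀²) + λ·K₂·ln²(R/r₀)) with constants K₁, K₂ > 0 and fixed λ, P_tx, r₀ > 0. Then P̄(R)/(λ²·P_tx·K₂·ln²R) → 1 as R → ∞; in particular P̄(R) = Θ(ln²R). -/
import Mathlib


open Filter

/-- Ground-reflection (α = 4) received-power scaling: with
`P̄(R) = λ·P_tx·(3K₁·(R² − r₀²)/(R²r₀²) + λ·K₂·ln²(R/r₀))` and `K₁, K₂ > 0`,
`P̄(R)/(λ²·P_tx·K₂·ln²R) → 1` as `R → ∞`. -/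
theorem stmt9 (lam r₀ Ptx K₁ K₂ : ℝ)
    (hlam : 0 < lam) (hr₀ : 0 < r₀) (hPtx : 0 < Ptx)
    (hK₁ : 0 < K₁) (hK₂ : 0 < K₂) :
    Tendsto (fun R : ℝ =>
        (lam * Ptx * (3 * K₁ * (R ^ 2 - r₀ ^ 2) / (R ^ 2 * r₀ ^ 2) +
          lam * K₂ * (Real.log (R / r₀)) ^ 2)) /
        (lam ^ 2 * Ptx * K₂ * (Real.log R) ^ 2))
      atTop (nhds 1) := by
  have hlog : Tendsto Real.log atTop atTop := Real.tendsto_log_atTop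
  have h1 : Tendsto (fun R : ℝ => Real.log r₀ / Real.log R) atTop (nhds 0) :=
    tendsto_const_nhds.div_atTop hlog
  have h2 : Tendsto (fun R : ℝ => (1 - Real.log r₀ / Real.log R) ^ 2) atTop (nhds 1) := by
    have := ((tendsto_const_nhds (x := (1:ℝ))).sub h1).pow 2
    simpa using this
  have hR2 : Tendsto (fun R : ℝ => r₀ ^ 2 / R ^ 2) atTop (nhds 0) :=
    tendsto_const_nhds.div_atTop (tendsto_pow_atTop (by norm_num))
  have hlog2 : Tendsto (fun R : ℝ => (1 : ℝ) / (Real.log R) ^ 2) atTop (nhds 0) :=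
    tendsto_const_nhds.div_atTop ((tendsto_pow_atTop (by norm_num)).comp hlog)
  have h3 : Tendsto (fun R : ℝ =>
      3 * K₁ / (lam * K₂ * r₀ ^ 2) * ((1 - r₀ ^ 2 / R ^ 2) * (1 / (Real.log R) ^ 2)))
      atTop (nhds 0) := by
    have := (((tendsto_const_nhds (x := (1:ℝ))).sub hR2).mul hlog2).const_mul (3 * K₁ / (lam * K₂ * r₀ ^ 2))
    simpa using this
  have hsum : Tendsto (fun R : ℝ =>
      3 * K₁ / (lam * K₂ * r₀ ^ 2) * ((1 - r₀ ^ 2 / R ^ 2) * (1 / (Real.log R) ^ 2)) +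
      (1 - Real.log r₀ / Real.log R) ^ 2) atTop (nhds 1) := by
    simpa using h3.add h2
  refine hsum.congr' ?_
  filter_upwards [eventually_gt_atTop (max 1 r₀)] with R hR
  have hR1 : (1 : ℝ) < R := lt_of_le_of_lt (le_max_left _ _) hR
  have hRr : r₀ < R := lt_of_le_of_lt (le_max_right _ _) hR
  have hR0 : (0 : ℝ) < R := lt_trans one_pos hR1
  have hlogR : Real.log R ≠ 0 := ne_of_gt (Real.log_pos hR1)
  have hld : Real.log (R / r₀) = Real.log R - Real.log r₀ :=
    Real.log_div (ne_of_gt hR0) (ne_of_gt hr₀)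
  rw [hld]
  field_simp
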